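/- The Laplace mechanism satisfies ε-differential privacy: if a statistic s mapping datasets to ℝ^r has l1 global sensitivity δ₁ = max over neighboring datasets x, x' of ‖s(x) - s(x')‖₁, then the mechanism that outputs s(x) + e, where e consists of r independent draws from the Laplace distribution with location 0 and scale δ₁/ε, satisfies: for all neighboring datasets x, x' and all measurable sets Q, the density ratio of the output satisfies e^{-ε} ≤ f(s*|x)/f(s*|x') ≤ e^{ε}. -/

import Mathlib

open Real Finset

/-!
Moving the location of a Laplace density by `d` changes its logarithm by at most `|d| / b`
(triangle inequality in the exponent). For the product density of `s x + e` this gives a log-ratio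
of at most `‖s x - s x'‖₁ / b ≤ δ₁ / b`, which is `ε` for the scale `b = δ₁ / ε`.
-/

noncomputable section

def laplaceDensity (μ b t : ℝ) : ℝ :=
  (2 * b)⁻¹ * exp (-|t - μ| / b)

/-- The density at `t` of `μ + e`, where `e` has independent `Lap(0, b)` coordinates. -/
def laplacePiDensity {ι : Type*} [Fintype ι] (μ : ι → ℝ) (b : ℝ) (t : ι → ℝ) : ℝ :=
  ∏ i, laplaceDensity (μ i) b (t i)

end

lemma laplaceDensity_nonneg {b : ℝ} (hb : 0 ≤ b) (μ t : ℝ) : 0 ≤ laplaceDensity μ b t := by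
  unfold laplaceDensity
  positivity

lemma laplaceDensity_div (μ δ ε t : ℝ) :
    laplaceDensity μ (δ / ε) t = ε / (2 * δ) * exp (-|t - μ| * ε / δ) := by
  rw [laplaceDensity, div_div_eq_mul_div, mul_div_assoc', inv_div]

lemma laplaceDensity_le_exp_mul {b : ℝ} (hb : 0 ≤ b) (μ ν t : ℝ) :
    laplaceDensity μ b t ≤ exp (|μ - ν| / b) * laplaceDensity ν b t := by
  have hshift : |t - ν| - |t - μ| ≤ |μ - ν| := by
    simpa using abs_sub_abs_le_abs_sub (t - ν) (t - μ)
  have hexp : -|t - μ| / b ≤ |μ - ν| / b + -|t - ν| / b := by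
    rw [← add_div]
    exact div_le_div_of_nonneg_right (by linarith) hb
  unfold laplaceDensity
  rw [mul_left_comm, ← exp_add]
  exact mul_le_mul_of_nonneg_left (exp_le_exp.mpr hexp) (by positivity)

section

variable {ι : Type*} [Fintype ι]

lemma laplacePiDensity_le_exp_mul {b : ℝ} (hb : 0 ≤ b) (μ ν t : ι → ℝ) :
    laplacePiDensity μ b t ≤ exp ((∑ i, |μ i - ν i|) / b) * laplacePiDensity ν b t := by
  rw [laplacePiDensity, laplacePiDensity, sum_div, exp_sum, ← prod_mul_distrib]
  exact prod_le_prod (fun i _ => laplaceDensity_nonneg hb _ _)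
    fun i _ => laplaceDensity_le_exp_mul hb _ _ _

lemma laplacePiDensity_le_exp_mul_of_sum_abs_le {ε δ : ℝ} (hε : 0 ≤ ε) {μ ν : ι → ℝ}
    (hsens : ∑ i, |μ i - ν i| ≤ δ) (t : ι → ℝ) :
    laplacePiDensity μ (δ / ε) t ≤ exp ε * laplacePiDensity ν (δ / ε) t := by
  have hδ : 0 ≤ δ := (sum_nonneg fun i _ => abs_nonneg _).trans hsens
  have hlog : (∑ i, |μ i - ν i|) / (δ / ε) ≤ ε := by
    rw [div_div_eq_mul_div]
    exact div_le_of_le_mul₀ hδ hε (by rw [mul_comm ε]; exact mul_le_mul_of_nonneg_right hsens hε)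
  have hb : 0 ≤ δ / ε := div_nonneg hδ hε
  exact (laplacePiDensity_le_exp_mul hb μ ν t).trans <| mul_le_mul_of_nonneg_right
    (exp_le_exp.mpr hlog) (prod_nonneg fun i _ => laplaceDensity_nonneg hb _ _)

lemma laplacePiDensity_mem_exp_bounds {ε δ : ℝ} (hε : 0 ≤ ε) {μ ν : ι → ℝ}
    (hsens : ∑ i, |μ i - ν i| ≤ δ) (t : ι → ℝ) :
    exp (-ε) * laplacePiDensity ν (δ / ε) t ≤ laplacePiDensity μ (δ / ε) t ∧
      laplacePiDensity μ (δ / ε) t ≤ exp ε * laplacePiDensity ν (δ / ε) t := by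
  have hsens' : ∑ i, |ν i - μ i| ≤ δ := by simpa only [abs_sub_comm] using hsens
  refine ⟨?_, laplacePiDensity_le_exp_mul_of_sum_abs_le hε hsens t⟩
  rw [exp_neg, inv_mul_le_iff₀ (exp_pos ε)]
  exact laplacePiDensity_le_exp_mul_of_sum_abs_le hε hsens' t

end

theorem laplace_mechanism_dp_general {X : Type*} (r : ℕ) (adj : X → X → Prop)
    (s : X → Fin r → ℝ) (ε δ₁ : ℝ) (hε : 0 < ε)
    (hsens : ∀ x x', adj x x' → ∑ i, |s x i - s x' i| ≤ δ₁)
    (f : X → (Fin r → ℝ) → ℝ)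
    (hf : ∀ x t, f x t = ∏ i, (ε / (2 * δ₁)) * Real.exp (-(|t i - s x i|) * ε / δ₁)) :
    ∀ x x', adj x x' → ∀ t : Fin r → ℝ,
      Real.exp (-ε) * f x' t ≤ f x t ∧ f x t ≤ Real.exp ε * f x' t := by
  intro x x' hadj t
  have hf_laplace : ∀ y, f y t = laplacePiDensity (s y) (δ₁ / ε) t := fun y => by
    simp only [hf, laplacePiDensity, laplaceDensity_div]
  rw [hf_laplace, hf_laplace]
  exact laplacePiDensity_mem_exp_bounds hε.le (hsens x x' hadj) t

/-- The Laplace mechanism satisfies ε-DP: if `s : X → ℝ^r` has l1 global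
sensitivity at most `δ₁` over neighboring datasets, then the density of the output
`s(x) + e` (with `e` i.i.d. Laplace(0, δ₁/ε) noise) satisfies
`e^{-ε} ≤ f(t|x)/f(t|x') ≤ e^{ε}` for all neighbors `x, x'` and all outputs `t`. -/
theorem laplace_mechanism_dp {X : Type*} (r : ℕ) (adj : X → X → Prop)
    (s : X → Fin r → ℝ) (ε δ₁ : ℝ) (hε : 0 < ε) (hδ : 0 < δ₁)
    (hsens : ∀ x x', adj x x' → ∑ i, |s x i - s x' i| ≤ δ₁)
    (f : X → (Fin r → ℝ) → ℝ)
    (hf : ∀ x t, f x t = ∏ i, (ε / (2 * δ₁)) * Real.exp (-(|t i - s x i|) * ε / δ₁)) :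
    ∀ x x', adj x x' → ∀ t : Fin r → ℝ,
      Real.exp (-ε) * f x' t ≤ f x t ∧ f x t ≤ Real.exp ε * f x' t :=
  laplace_mechanism_dp_general r adj s ε δ₁ hε hsens f hf
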